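/- arXiv:2009.06256 — 4 statements merged into one kernel-verified Lean document; each statement's English description precedes it below -/
import Mathlib

section
/- Assume the aperiodic 0-1 matrix 𝐀 satisfies that at most one index i ∈ {1,…,N} has exactly one j with 𝐀_{ij} = 1. Then for every row-stochastic matrix P with zero pattern 𝐀 and for any two distinct admissible pairs (i,j) ≠ (k,l) with 𝐀_{ij} = 𝐀_{kl} = 1, there exists a row-stochastic matrix Q with zero pattern 𝐀 such that P_{ij}/P_{kl} ≠ Q_{ij}/Q_{kl}. -/
/-!
Moving half of the mass of one positive entry of a row onto another positive entry of the same
row keeps a stochastic matrix stochastic with the same zero pattern, strictly increases the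
receiving entry and decreases no other entry. If row `i` has a second positive entry besides
`(i, j)`, feeding `(i, j)` this way strictly increases `P i j / P k l`. Otherwise row `i` has a
single positive entry, so by hypothesis row `k` has two, and feeding `(k, l)` strictly decreases
the ratio.
-/

theorem Finset.exists_mem_ne_of_card_filter_card_eq_one_le_one {m n : Type*} [Fintype m]
    {s : m → Finset n} (hs : (Finset.univ.filter fun i => (s i).card = 1).card ≤ 1) {i k : m}
    (hik : i ≠ k) (hi : (s i).card = 1) {l : n} (hl : l ∈ s k) : ∃ l' ∈ s k, l' ≠ l := by
  refine Finset.exists_mem_ne (lt_of_le_of_ne (Finset.card_pos.2 ⟨l, hl⟩) fun hk => hik ?_) l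
  exact Finset.card_le_one.1 hs i (by simp [hi]) k (by simp [hk])

namespace Matrix

variable {m n α : Type*} [DecidableEq m] [DecidableEq n]

structure IsStochasticWithPattern [Fintype n] [AddCommMonoid α] [One α] [LT α]
    (A P : Matrix m n α) : Prop where
  pos_iff : ∀ r c, 0 < P r c ↔ A r c = 1
  eq_zero : ∀ r c, A r c = 0 → P r c = 0
  row_sum : ∀ r, ∑ c, P r c = 1

section ShiftMass

variable [Field α]

def shiftMass (P : Matrix m n α) (r : m) (c₁ c₂ : n) : Matrix m n α :=
  P + single r c₁ (P r c₂ / 2) - single r c₂ (P r c₂ / 2)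

variable {P : Matrix m n α} {r : m} {c₁ c₂ : n}

theorem shiftMass_apply_left (h : c₁ ≠ c₂) : shiftMass P r c₁ c₂ r c₁ = P r c₁ + P r c₂ / 2 := by
  simp [shiftMass, single_apply_of_col_ne _ _ h.symm]

theorem shiftMass_apply_of_ne {a : m} {b : n} (h₁ : (a, b) ≠ (r, c₁)) (h₂ : (a, b) ≠ (r, c₂)) :
    shiftMass P r c₁ c₂ a b = P a b := by
  have h₁' : ¬(r = a ∧ c₁ = b) := fun ⟨ha, hb⟩ => h₁ (by rw [ha, hb])
  have h₂' : ¬(r = a ∧ c₂ = b) := fun ⟨ha, hb⟩ => h₂ (by rw [ha, hb])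
  simp [shiftMass, h₁', h₂']

theorem sum_shiftMass_apply [Fintype n] (a : m) :
    ∑ b, shiftMass P r c₁ c₂ a b = ∑ b, P a b := by
  by_cases ha : r = a
  · simp [shiftMass, Finset.sum_sub_distrib, Finset.sum_add_distrib, single_apply, ha]
  · simp [shiftMass, single_apply_of_row_ne ha]

variable [LinearOrder α] [IsStrictOrderedRing α]

theorem shiftMass_apply_right (h : c₁ ≠ c₂) : shiftMass P r c₁ c₂ r c₂ = P r c₂ / 2 := by
  simp [shiftMass, single_apply_of_col_ne _ _ h]
  ring

theorem lt_shiftMass_apply_left (h : c₁ ≠ c₂) (h₂ : 0 < P r c₂) :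
    P r c₁ < shiftMass P r c₁ c₂ r c₁ := by
  rw [shiftMass_apply_left h]
  linarith

theorem shiftMass_apply_le {a : m} {b : n} (h : (a, b) ≠ (r, c₁)) (h₂ : 0 ≤ P r c₂) :
    shiftMass P r c₁ c₂ a b ≤ P a b := by
  by_cases hb : (a, b) = (r, c₂)
  · obtain ⟨rfl, rfl⟩ := Prod.mk.inj hb
    rw [shiftMass_apply_right fun hc => h (by rw [hc])]
    linarith
  · exact (shiftMass_apply_of_ne h hb).le

theorem shiftMass_apply_eq_zero (h₁ : 0 < P r c₁) (h₂ : 0 < P r c₂) {a : m} {b : n}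
    (hab : P a b = 0) : shiftMass P r c₁ c₂ a b = 0 := by
  rw [shiftMass_apply_of_ne, hab] <;> rintro ⟨⟩ <;> linarith

theorem pos_shiftMass_apply_iff (h : c₁ ≠ c₂) (h₁ : 0 < P r c₁) (h₂ : 0 < P r c₂) (a : m)
    (b : n) : 0 < shiftMass P r c₁ c₂ a b ↔ 0 < P a b := by
  by_cases hb₁ : (a, b) = (r, c₁)
  · obtain ⟨rfl, rfl⟩ := Prod.mk.inj hb₁
    simp only [h₁, iff_true]
    exact h₁.trans (lt_shiftMass_apply_left h h₂)
  by_cases hb₂ : (a, b) = (r, c₂)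
  · obtain ⟨rfl, rfl⟩ := Prod.mk.inj hb₂
    rw [shiftMass_apply_right h]
    simp only [h₂, iff_true]
    positivity
  rw [shiftMass_apply_of_ne hb₁ hb₂]

theorem div_lt_shiftMass_apply_div (h : c₁ ≠ c₂) (h₁ : 0 < P r c₁) (h₂ : 0 < P r c₂) {a : m}
    {b : n} (hab : (a, b) ≠ (r, c₁)) (hpos : 0 < P a b) :
    P r c₁ / P a b < shiftMass P r c₁ c₂ r c₁ / shiftMass P r c₁ c₂ a b :=
  div_lt_div₀ (lt_shiftMass_apply_left h h₂) (shiftMass_apply_le hab h₂.le)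
    (h₁.trans (lt_shiftMass_apply_left h h₂)).le ((pos_shiftMass_apply_iff h h₁ h₂ a b).2 hpos)

theorem shiftMass_apply_div_lt_div (h : c₁ ≠ c₂) (h₁ : 0 < P r c₁) (h₂ : 0 < P r c₂) {a : m}
    {b : n} (hab : (a, b) ≠ (r, c₁)) (hpos : 0 < P a b) :
    shiftMass P r c₁ c₂ a b / shiftMass P r c₁ c₂ r c₁ < P a b / P r c₁ :=
  div_lt_div₀' (shiftMass_apply_le hab h₂.le) (lt_shiftMass_apply_left h h₂) hpos h₁

theorem IsStochasticWithPattern.shiftMass [Fintype n] {A : Matrix m n α}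
    (hP : IsStochasticWithPattern A P) {r : m} {c₁ c₂ : n} (h : c₁ ≠ c₂)
    (h₁ : A r c₁ = 1) (h₂ : A r c₂ = 1) : IsStochasticWithPattern A (P.shiftMass r c₁ c₂) where
  pos_iff a b :=
    (pos_shiftMass_apply_iff h ((hP.pos_iff _ _).2 h₁) ((hP.pos_iff _ _).2 h₂) a b).trans
      (hP.pos_iff a b)
  eq_zero a b hab := shiftMass_apply_eq_zero ((hP.pos_iff _ _).2 h₁) ((hP.pos_iff _ _).2 h₂)
    (hP.eq_zero a b hab)
  row_sum a := (sum_shiftMass_apply a).trans (hP.row_sum a)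

end ShiftMass

end Matrix

theorem exists_stochastic_with_different_ratio_general
    (N : ℕ) (A0 : Matrix (Fin N) (Fin N) ℝ)
    (hdelta :
      (Finset.univ.filter fun i : Fin N =>
        (Finset.univ.filter fun j : Fin N => A0 i j = 1).card = 1).card ≤ 1)
    (P : Matrix (Fin N) (Fin N) ℝ)
    (hPpos : ∀ i j, 0 < P i j ↔ A0 i j = 1)
    (hPzero : ∀ i j, A0 i j = 0 → P i j = 0)
    (hPstoch : ∀ i, ∑ j, P i j = 1)
    (i j k l : Fin N) (hij : A0 i j = 1) (hkl : A0 k l = 1)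
    (hne : (i, j) ≠ (k, l)) :
    ∃ Q : Matrix (Fin N) (Fin N) ℝ,
      (∀ r c, 0 < Q r c ↔ A0 r c = 1) ∧ (∀ r c, A0 r c = 0 → Q r c = 0) ∧
      (∀ r, ∑ c, Q r c = 1) ∧ P i j / P k l ≠ Q i j / Q k l := by
  have hP : Matrix.IsStochasticWithPattern A0 P := ⟨hPpos, hPzero, hPstoch⟩
  have hpos {r c : Fin N} (h : A0 r c = 1) : 0 < P r c := (hPpos r c).2 h
  suffices ∃ Q, Matrix.IsStochasticWithPattern A0 Q ∧ P i j / P k l ≠ Q i j / Q k l by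
    obtain ⟨Q, hQ, hratio⟩ := this
    exact ⟨Q, hQ.pos_iff, hQ.eq_zero, hQ.row_sum, hratio⟩
  by_cases hrow : ∃ j' ≠ j, A0 i j' = 1
  · obtain ⟨j', hj', hij'⟩ := hrow
    exact ⟨_, hP.shiftMass hj'.symm hij hij',
      (Matrix.div_lt_shiftMass_apply_div hj'.symm (hpos hij) (hpos hij') hne.symm (hpos hkl)).ne⟩
  · have hrow_i : (Finset.univ.filter fun c => A0 i c = 1) = {j} := by
      ext c
      simp only [Finset.mem_filter, Finset.mem_univ, true_and, Finset.mem_singleton]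
      exact ⟨fun hc => by_contra fun hcj => hrow ⟨c, hcj, hc⟩, fun hc => hc ▸ hij⟩
    have hik : i ≠ k := by
      rintro rfl
      exact hrow ⟨l, fun hlj => hne (by rw [hlj]), hkl⟩
    obtain ⟨l', hl', hl'l⟩ := Finset.exists_mem_ne_of_card_filter_card_eq_one_le_one hdelta hik
      (by rw [hrow_i, Finset.card_singleton]) (by simpa using hkl)
    replace hl' : A0 k l' = 1 := by simpa using hl'
    exact ⟨_, hP.shiftMass hl'l.symm hkl hl',
      (Matrix.shiftMass_apply_div_lt_div hl'l.symm (hpos hkl) (hpos hl') hne (hpos hij)).ne'⟩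

/-- Assume the aperiodic 0-1 matrix `A0` has at most one row `i` containing exactly one `j`
with `A0 i j = 1`.  Then for every row-stochastic matrix `P` with zero pattern `A0` and any
two distinct admissible pairs `(i, j) ≠ (k, l)`, there is a row-stochastic matrix `Q` with
zero pattern `A0` such that `P i j / P k l ≠ Q i j / Q k l`. -/
theorem exists_stochastic_with_different_ratio
    (N : ℕ) (hN : 2 ≤ N) (A0 : Matrix (Fin N) (Fin N) ℝ)
    (h01 : ∀ i j, A0 i j = 0 ∨ A0 i j = 1)
    (hap : ∃ k : ℕ, ∀ i j, 0 < (A0 ^ k) i j)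
    (hdelta :
      (Finset.univ.filter fun i : Fin N =>
        (Finset.univ.filter fun j : Fin N => A0 i j = 1).card = 1).card ≤ 1)
    (P : Matrix (Fin N) (Fin N) ℝ)
    (hPpos : ∀ i j, 0 < P i j ↔ A0 i j = 1)
    (hPzero : ∀ i j, A0 i j = 0 → P i j = 0)
    (hPstoch : ∀ i, ∑ j, P i j = 1)
    (i j k l : Fin N) (hij : A0 i j = 1) (hkl : A0 k l = 1)
    (hne : (i, j) ≠ (k, l)) :
    ∃ Q : Matrix (Fin N) (Fin N) ℝ,
      (∀ r c, 0 < Q r c ↔ A0 r c = 1) ∧ (∀ r c, A0 r c = 0 → Q r c = 0) ∧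
      (∀ r, ∑ c, Q r c = 1) ∧ P i j / P k l ≠ Q i j / Q k l :=
  exists_stochastic_with_different_ratio_general N A0 hdelta P hPpos hPzero hPstoch i j k l hij hkl
    hne
end

section
/- The map sending a matrix A ∈ M to its Perron root λ(A) is continuous (indeed real analytic) on M. -/
/-!
A monic polynomial of degree `d` over `ℂ` is `∏ (X - w)` over its roots, so if its value at `z`
is smaller than `ε ^ d` in modulus, it has a root within `ε` of `z`. Characteristic polynomials
depend continuously on the matrix, uniformly on compact sets, and their roots are bounded by an
operator norm; hence for `B` near `A` every root of `χ_A` lies near a root of `χ_B` and vice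
versa. The Perron root is a root of maximal modulus, so this gives `λ A ≤ λ B + ε` and
`λ B ≤ λ A + ε`.
-/

open Polynomial Filter Topology

theorem Polynomial.exists_isRoot_norm_sub_lt_of_norm_eval_lt {K : Type*} [NormedField K]
    [IsAlgClosed K] {p : K[X]} (hp : p.Monic) {z : K} {ε : ℝ} (hε : 0 ≤ ε)
    (h : ‖p.eval z‖ < ε ^ p.natDegree) : ∃ w, p.IsRoot w ∧ ‖z - w‖ < ε := by
  by_contra! hfar
  have hsplit : p.Splits := IsAlgClosed.splits p
  refine h.not_ge ?_
  rw [hsplit.eval_eq_prod_roots, hp.leadingCoeff, one_mul, ← normHom_apply,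
    map_multiset_prod, Multiset.map_map, hsplit.natDegree_eq_card_roots,
    ← Multiset.prod_replicate, ← Multiset.map_const']
  exact Multiset.prod_map_le_prod_map₀ _ _ (fun _ _ => hε)
    fun w hw => hfar w (isRoot_of_mem_roots hw)

section

variable {n : Type*} [Fintype n] [DecidableEq n]
variable {X : Type*} [TopologicalSpace X] {f : X → Matrix n n ℂ}

theorem Continuous.eval_charpoly (hf : Continuous f) {g : X → ℂ} (hg : Continuous g) :
    Continuous fun x => (f x).charpoly.eval (g x) := by
  simp_rw [Matrix.eval_charpoly]
  exact ((continuous_pi fun _ => hg).matrix_diagonal.sub hf).matrix_det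

namespace Matrix

theorem eventually_exists_isRoot_charpoly_norm_sub_lt (hf : Continuous f) {x : X} {z : ℂ}
    (hz : (f x).charpoly.IsRoot z) {ε : ℝ} (hε : 0 < ε) :
    ∀ᶠ y in 𝓝 x, ∃ w, (f y).charpoly.IsRoot w ∧ ‖z - w‖ < ε := by
  have hlim : Tendsto (fun y => (f y).charpoly.eval z) (𝓝 x) (𝓝 0) := by
    simpa [hz.eq_zero] using (hf.eval_charpoly (continuous_const (y := z))).tendsto x
  filter_upwards [hlim.norm.eventually_lt_const (by simpa using pow_pos hε (Fintype.card n))]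
    with y hy
  exact Polynomial.exists_isRoot_norm_sub_lt_of_norm_eval_lt (f y).charpoly_monic hε.le
    (by rwa [charpoly_natDegree_eq_dim])

section linftyOp

attribute [local instance] Matrix.linftyOpNormedRing Matrix.linftyOpNormedAlgebra

theorem norm_le_linftyOpNorm_mul_of_isRoot_charpoly {B : Matrix n n ℂ} {w : ℂ}
    (hw : B.charpoly.IsRoot w) : ‖w‖ ≤ ‖B‖ * ‖(1 : Matrix n n ℂ)‖ := by
  simpa using spectrum.subset_closedBall_norm_mul B (mem_spectrum_of_isRoot_charpoly hw)

theorem eventually_forall_isRoot_charpoly_exists_norm_sub_lt (hf : Continuous f) (x : X)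
    {ε : ℝ} (hε : 0 < ε) :
    ∀ᶠ y in 𝓝 x, ∀ w, (f y).charpoly.IsRoot w → ∃ z, (f x).charpoly.IsRoot z ∧ ‖w - z‖ < ε := by
  set R := ‖f x‖ * ‖(1 : Matrix n n ℂ)‖ + 1
  have hbound : ∀ᶠ y in 𝓝 x, ‖f y‖ * ‖(1 : Matrix n n ℂ)‖ < R :=
    ((hf.norm.mul continuous_const).tendsto x).eventually_lt_const (lt_add_one _)
  have hclose : ∀ᶠ y in 𝓝 x, ∀ w ∈ Metric.closedBall (0 : ℂ) R,
      ‖(f x).charpoly.eval w - (f y).charpoly.eval w‖ < ε ^ Fintype.card n := by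
    refine (isCompact_closedBall 0 R).eventually_forall_of_forall_eventually fun w _ => ?_
    have hcont : Continuous fun p : X × ℂ =>
        ‖(f x).charpoly.eval p.2 - (f p.1).charpoly.eval p.2‖ :=
      ((continuous_const.eval_charpoly continuous_snd).sub
        ((hf.comp continuous_fst).eval_charpoly continuous_snd)).norm
    simpa using (hcont.tendsto (x, w)).eventually_lt_const (by simpa using pow_pos hε _)
  filter_upwards [hbound, hclose] with y hy hyclose w hw
  have hwR : w ∈ Metric.closedBall (0 : ℂ) R := by
    simpa using (norm_le_linftyOpNorm_mul_of_isRoot_charpoly hw).trans hy.le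
  exact Polynomial.exists_isRoot_norm_sub_lt_of_norm_eval_lt (f x).charpoly_monic hε.le
    (by simpa [hw.eq_zero, charpoly_natDegree_eq_dim] using hyclose w hwR)

end linftyOp

theorem continuousOn_of_isRoot_charpoly_of_forall_norm_le (hf : Continuous f) {S : Set X}
    {ρ : X → ℝ} (hroot : ∀ x ∈ S, (f x).charpoly.IsRoot (ρ x))
    (hmax : ∀ x ∈ S, ∀ w, (f x).charpoly.IsRoot w → ‖w‖ ≤ ρ x) : ContinuousOn ρ S := by
  have hreal : ∀ (a : ℝ) (w : ℂ), a ≤ ‖w‖ + ‖(a : ℂ) - w‖ := fun a w =>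
    (le_abs_self a).trans (by simpa using norm_le_norm_add_norm_sub' (a : ℂ) w)
  intro x hx
  refine Metric.tendsto_nhds.mpr fun ε hε => ?_
  filter_upwards [self_mem_nhdsWithin,
    nhdsWithin_le_nhds (eventually_exists_isRoot_charpoly_norm_sub_lt hf (hroot x hx) hε),
    nhdsWithin_le_nhds (eventually_forall_isRoot_charpoly_exists_norm_sub_lt hf x hε)]
    with y hy ⟨w, hw, hxw⟩ hnear
  obtain ⟨z, hz, hyz⟩ := hnear _ (hroot y hy)
  rw [Real.dist_eq, abs_sub_lt_iff]
  constructor <;> linarith [hreal (ρ x) w, hreal (ρ y) z, hmax y hy w hw, hmax x hx z hz]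

end Matrix

end

theorem perron_root_continuousOn_general
    (N : ℕ)
    (M : Set (Matrix (Fin N) (Fin N) ℝ))
    (lam : Matrix (Fin N) (Fin N) ℝ → ℝ)
    (hlam : ∀ A ∈ M, 0 < lam A ∧
      (A.map Complex.ofReal).charpoly.IsRoot ((lam A : ℝ) : ℂ) ∧
      (∀ η : ℂ, (A.map Complex.ofReal).charpoly.IsRoot η → η ≠ ((lam A : ℝ) : ℂ) →
        ‖η‖ < lam A)) :
    ContinuousOn lam M := by
  refine Matrix.continuousOn_of_isRoot_charpoly_of_forall_norm_le
    (continuous_id.matrix_map Complex.continuous_ofReal) (fun A hA => (hlam A hA).2.1)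
    fun A hA η hη => ?_
  obtain ⟨hpos, -, hdom⟩ := hlam A hA
  rcases eq_or_ne η (lam A) with rfl | hne
  · simp [abs_of_pos hpos]
  · exact (hdom η hη hne).le

/-- The Perron root, as a function on the set `M` of nonnegative matrices with zero pattern
given by the aperiodic 0-1 matrix `A0`, is continuous on `M`.  Here `lam : Matrix → ℝ` is any
function which, on `M`, picks out the Perron root: the positive eigenvalue strictly dominating
in modulus every other complex eigenvalue. -/
theorem perron_root_continuousOn
    (N : ℕ) (hN : 2 ≤ N) (A0 : Matrix (Fin N) (Fin N) ℝ)
    (h01 : ∀ i j, A0 i j = 0 ∨ A0 i j = 1)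
    (hap : ∃ k : ℕ, ∀ i j, 0 < (A0 ^ k) i j)
    (M : Set (Matrix (Fin N) (Fin N) ℝ))
    (hM : M = {A | ∀ i j, (0 < A i j ↔ A0 i j = 1) ∧ (A0 i j = 0 → A i j = 0)})
    (lam : Matrix (Fin N) (Fin N) ℝ → ℝ)
    (hlam : ∀ A ∈ M, 0 < lam A ∧
      (A.map Complex.ofReal).charpoly.IsRoot ((lam A : ℝ) : ℂ) ∧
      (∀ η : ℂ, (A.map Complex.ofReal).charpoly.IsRoot η → η ≠ ((lam A : ℝ) : ℂ) →
        ‖η‖ < lam A)) :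
    ContinuousOn lam M :=
  perron_root_continuousOn_general N M lam hlam
end

section
/- The zero set of a non-constant real analytic function on a connected open subset of ℝⁿ has Lebesgue measure zero. -/
/-!
At a zero `x` of `f`, not all iterated derivatives of `f` vanish: otherwise the Taylor series
shows `f = 0` near `x`, hence on all of `U` by the identity theorem. As `D⁰f x = 0`, there is an
order `k` with `Dᵏf x = 0 ≠ Dᵏ⁺¹f x`, so some partial derivative `∂ᵢ Dᵏf` is nonzero at `x`.
So the zero set is covered by countably many sets `{Dᵏf = 0, ∂ᵢ Dᵏf ≠ 0}`. On each line in
direction `eᵢ`, such a set consists of zeros of a function of one variable with nonzero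
derivative; these are isolated, hence countable, and Fubini's theorem makes the set null.
-/

open MeasureTheory Set Filter Topology

theorem countable_setOf_eq_zero_and_deriv_ne_zero {E : Type*} [NormedAddCommGroup E]
    [NormedSpace ℝ E] (g : ℝ → E) : {t | g t = 0 ∧ deriv g t ≠ 0}.Countable := by
  refine (HereditarilyLindelofSpace.isLindelof _).countable_of_isDiscrete ?_
  rw [isDiscrete_iff_nhdsNE]
  rintro t ⟨-, ht⟩
  rw [inf_principal_eq_bot]
  filter_upwards [(differentiableAt_of_deriv_ne_zero ht).hasDerivAt.eventually_ne ht (c := 0)]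
    with s hs using fun h => hs h.1

theorem measure_pi_eq_zero_of_forall_measure_slice_eq_zero {α : Type*} [MeasurableSpace α]
    {μ : Measure α} [SigmaFinite μ] {n : ℕ} (i : Fin (n + 1)) {B : Set (Fin (n + 1) → α)}
    (hB : MeasurableSet B) (h : ∀ y : Fin n → α, μ {t | i.insertNth t y ∈ B} = 0) :
    Measure.pi (fun _ => μ) B = 0 := by
  have hinsert : MeasurePreserving (fun p : (Fin n → α) × α => i.insertNth p.2 p.1)
      ((Measure.pi fun _ => μ).prod μ) (Measure.pi fun _ => μ) :=
    ((measurePreserving_piFinSuccAbove (fun _ => μ) i).symm _).comp Measure.measurePreserving_swap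
  rw [← hinsert.measure_preimage hB.nullMeasurableSet,
    Measure.measure_prod_null (hinsert.measurable hB)]
  exact Eventually.of_forall h

theorem hasDerivAt_insertNth {n : ℕ} (i : Fin (n + 1)) (y : Fin n → ℝ) (t : ℝ) :
    HasDerivAt (fun s : ℝ => (i.insertNth s y : Fin (n + 1) → ℝ)) (Pi.single i 1) t := by
  rw [hasDerivAt_pi]
  intro j
  induction j using Fin.succAboveCases i with
  | x => simpa using hasDerivAt_id' t
  | p j => simpa [Pi.single_eq_of_ne (Fin.succAbove_ne i j)] using hasDerivAt_const t (y j)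

theorem ContinuousOn.measurableSet_setOf_eq_zero_and_fderiv_ne_zero {n : ℕ} {E : Type*}
    [NormedAddCommGroup E] [NormedSpace ℝ E] [CompleteSpace E] {U : Set (Fin n → ℝ)}
    {g : (Fin n → ℝ) → E} (hg : ContinuousOn g U) (hU : IsOpen U) (v : Fin n → ℝ) :
    MeasurableSet {x | x ∈ U ∧ g x = 0 ∧ fderiv ℝ g x v ≠ 0} := by
  borelize E
  have hzeros : MeasurableSet (U ∩ g ⁻¹' {0}) := by
    rw [← sdiff_compl, ← sdiff_self_inter]
    exact hU.measurableSet.diff (hg.isOpen_inter_preimage hU isOpen_compl_singleton).measurableSet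
  rw [ofPred_and, ofPred_and, ofPred_mem_eq, ← inter_assoc]
  exact hzeros.inter
    ((measurableSet_singleton 0).compl.preimage (measurable_fderiv_apply_const ℝ g v))

theorem ContinuousOn.volume_setOf_eq_zero_and_fderiv_single_ne_zero {n : ℕ} {E : Type*}
    [NormedAddCommGroup E] [NormedSpace ℝ E] [CompleteSpace E] {U : Set (Fin n → ℝ)}
    {g : (Fin n → ℝ) → E} (hg : ContinuousOn g U) (hU : IsOpen U) (i : Fin n) :
    volume {x | x ∈ U ∧ g x = 0 ∧ fderiv ℝ g x (Pi.single i 1) ≠ 0} = 0 := by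
  obtain ⟨n, rfl⟩ := Nat.exists_eq_add_one_of_ne_zero i.pos.ne'
  refine measure_pi_eq_zero_of_forall_measure_slice_eq_zero i
    (hg.measurableSet_setOf_eq_zero_and_fderiv_ne_zero hU _) fun y => Countable.measure_zero ?_ _
  refine (countable_setOf_eq_zero_and_deriv_ne_zero fun t => g (i.insertNth t y)).mono ?_
  rintro t ⟨-, hzero, hderiv⟩
  have hdiff : DifferentiableAt ℝ g (i.insertNth t y) := by
    by_contra h
    simp [fderiv_zero_of_not_differentiableAt h] at hderiv
  refine ⟨hzero, ?_⟩
  show deriv (g ∘ fun s => i.insertNth s y) t ≠ 0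
  rwa [(hdiff.hasFDerivAt.comp_hasDerivAt t (hasDerivAt_insertNth i y t)).deriv]

theorem ContinuousLinearMap.exists_apply_single_ne_zero {𝕜 ι M : Type*} [Semiring 𝕜]
    [TopologicalSpace 𝕜] [Finite ι] [DecidableEq ι] [AddCommMonoid M] [Module 𝕜 M]
    [TopologicalSpace M] {L : (ι → 𝕜) →L[𝕜] M} (hL : L ≠ 0) : ∃ i, L (Pi.single i 1) ≠ 0 := by
  by_contra! h
  exact hL (coe_injective ((Pi.basisFun 𝕜 ι).ext fun i => by rw [Pi.basisFun_apply]; exact h i))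

section Analytic

variable {𝕜 E F : Type*} [NontriviallyNormedField 𝕜] [CharZero 𝕜] [NormedAddCommGroup F]
  [NormedSpace 𝕜 F] [CompleteSpace F]

theorem AnalyticAt.eventually_eq_zero_of_forall_iteratedFDeriv_eq_zero [NormedAddCommGroup E]
    [NormedSpace 𝕜 E] {f : E → F} {x : E} (hf : AnalyticAt 𝕜 f x)
    (h : ∀ k, iteratedFDeriv 𝕜 k f x = 0) : f =ᶠ[𝓝 x] 0 := by
  obtain ⟨p, r, hp⟩ := hf
  filter_upwards [Metric.eball_mem_nhds x hp.r_pos] with y hy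
  have hsum := hp.hasSum_iteratedFDeriv (y := y - x) (by simpa [edist_eq_enorm_sub] using hy)
  simp only [h, zero_apply, smul_zero, add_sub_cancel] at hsum
  exact hsum.unique hasSum_zero

theorem AnalyticOnNhd.exists_iteratedFDeriv_ne_zero [NormedAddCommGroup E] [NormedSpace 𝕜 E]
    {f : E → F} {U : Set E} (hf : AnalyticOnNhd 𝕜 f U) (hU : IsPreconnected U) {x y : E}
    (hx : x ∈ U) (hy : y ∈ U) (hfy : f y ≠ 0) : ∃ k, iteratedFDeriv 𝕜 k f x ≠ 0 := by
  by_contra! h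
  exact hfy (hf.eqOn_zero_of_preconnected_of_eventuallyEq_zero hU hx
    ((hf x hx).eventually_eq_zero_of_forall_iteratedFDeriv_eq_zero h) hy)

theorem AnalyticOnNhd.setOf_eq_zero_subset_iUnion {ι : Type*} [Fintype ι] [DecidableEq ι]
    {f : (ι → 𝕜) → F} {U : Set (ι → 𝕜)} (hf : AnalyticOnNhd 𝕜 f U) (hU : IsPreconnected U)
    {y : ι → 𝕜} (hy : y ∈ U) (hfy : f y ≠ 0) :
    {x | x ∈ U ∧ f x = 0} ⊆ ⋃ (k : ℕ) (i : ι), {x | x ∈ U ∧ iteratedFDeriv 𝕜 k f x = 0 ∧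
      fderiv 𝕜 (iteratedFDeriv 𝕜 k f) x (Pi.single i 1) ≠ 0} := by
  rintro x ⟨hx, hfx⟩
  have hD0 : iteratedFDeriv 𝕜 0 f x = 0 := by ext; simp [hfx]
  obtain ⟨k, hk, hk1⟩ := Nat.exists_not_and_succ_of_not_zero_of_exists (p := fun k =>
    iteratedFDeriv 𝕜 k f x ≠ 0) (not_not.mpr hD0) (hf.exists_iteratedFDeriv_ne_zero hU hx hy hfy)
  obtain ⟨i, hi⟩ : ∃ i, fderiv 𝕜 (iteratedFDeriv 𝕜 k f) x (Pi.single i 1) ≠ 0 := by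
    refine ContinuousLinearMap.exists_apply_single_ne_zero fun h => hk1 ?_
    rw [iteratedFDeriv_succ_eq_comp_left, Function.comp_apply, h, LinearIsometryEquiv.map_zero]
  exact mem_iUnion₂.mpr ⟨k, i, hx, not_not.mp hk, hi⟩

end Analytic

/-- The zero set of a real analytic function, not identically zero, on a connected open subset
of `ℝⁿ` has Lebesgue measure zero. -/
theorem zero_set_of_analytic_measure_zero
    (n : ℕ) (U : Set (Fin n → ℝ)) (f : (Fin n → ℝ) → ℝ)
    (hU : IsOpen U) (hconn : IsConnected U)
    (hf : AnalyticOn ℝ f U)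
    (hne : ¬ ∀ x ∈ U, f x = 0) :
    volume {x | x ∈ U ∧ f x = 0} = 0 := by
  have hf' : AnalyticOnNhd ℝ f U := hU.analyticOn_iff_analyticOnNhd.mp hf
  obtain ⟨y, hy, hfy⟩ : ∃ y ∈ U, f y ≠ 0 := by simpa using hne
  refine measure_mono_null (hf'.setOf_eq_zero_subset_iUnion hconn.isPreconnected hy hfy) ?_
  refine measure_iUnion_null fun k => measure_iUnion_null fun i => ?_
  exact (hf'.iteratedFDeriv_of_isOpen hU k).continuousOn
    |>.volume_setOf_eq_zero_and_fderiv_single_ne_zero hU i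
end

section
/- Let f ∈ L_n(Σ_𝐀; ℝ) be an n-locally constant function which is 'separating', i.e., f(ω) ≠ f(ω') whenever ω|n ≠ ω'|n. Let X, Y ⊆ Σ_𝐀 be dense, shift-forward-invariant subsets (σ(X) ⊆ X, σ(Y) ⊆ Y), let g ∈ L_n(Σ_𝐀; ℝ), and let Φ : X → Y be a surjection with Φ∘σ = σ∘Φ on X and f = g∘Φ on X. Then for all m ∈ ℕ and all ω, ω' ∈ X with ω|nm = ω'|nm, we have Φ(ω)|nm = Φ(ω')|nm; consequently Φ is uniformly continuous on X and extends uniquely to a continuous map Φ* : Σ_𝐀 → Σ_𝐀 with Φ*∘σ = σ∘Φ*. -/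
open MeasureTheory Filter Topology
open scoped BigOperators ENNReal

/-- The one-sided topological Markov shift over the alphabet `Fin N` with (0-1 real)
transition matrix `A`. -/
def Shift (N : ℕ) (A : Matrix (Fin N) (Fin N) ℝ) : Type :=
  {ω : ℕ → Fin N // ∀ n, A (ω n) (ω (n + 1)) = 1}

/-- Product (= metric `d(ω,ω') = ∑ |ω_n − ω'_n| / 2^n`) uniformity on the shift space. -/
noncomputable instance (N : ℕ) (A : Matrix (Fin N) (Fin N) ℝ) : UniformSpace (Shift N A) :=
  letI : UniformSpace (Fin N) := ⊥
  inferInstanceAs (UniformSpace {ω : ℕ → Fin N // ∀ n, A (ω n) (ω (n + 1)) = 1})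

noncomputable instance (N : ℕ) (A : Matrix (Fin N) (Fin N) ℝ) : MeasurableSpace (Shift N A) := borel _
instance (N : ℕ) (A : Matrix (Fin N) (Fin N) ℝ) : BorelSpace (Shift N A) := ⟨rfl⟩

/-- The shift map `σ`. -/
def shiftMap {N : ℕ} {A : Matrix (Fin N) (Fin N) ℝ} : Shift N A → Shift N A :=
  fun ω => ⟨fun n => ω.1 (n + 1), fun n => ω.2 (n + 1)⟩

/-- The cylinder `[ω|n]` of points agreeing with `ω` in the first `n` coordinates. -/
def cyl {N : ℕ} {A : Matrix (Fin N) (Fin N) ℝ} (ω : Shift N A) (n : ℕ) : Set (Shift N A) :=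
  {ω' | ∀ k < n, ω'.1 k = ω.1 k}

/-- The cylinder `[w]` of a word `w` of length `n`. -/
def cylW {N : ℕ} {A : Matrix (Fin N) (Fin N) ℝ} {n : ℕ} (w : Fin n → Fin N) :
    Set (Shift N A) :=
  {ω | ∀ k : Fin n, ω.1 k.1 = w k}

/-- Birkhoff sum `S_n f = ∑_{k<n} f ∘ σ^k`. -/
noncomputable def birkhoff {N : ℕ} {A : Matrix (Fin N) (Fin N) ℝ} (f : Shift N A → ℝ)
    (n : ℕ) (ω : Shift N A) : ℝ :=
  ∑ k ∈ Finset.range n, f (shiftMap^[k] ω)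

/-- The matrix `A` is a 0-1 matrix. -/
def ZeroOne {N : ℕ} (A : Matrix (Fin N) (Fin N) ℝ) : Prop := ∀ i j, A i j = 0 ∨ A i j = 1

/-- The matrix `A` is aperiodic: some power has all entries positive. -/
def Aperiodic {N : ℕ} (A : Matrix (Fin N) (Fin N) ℝ) : Prop := ∃ k : ℕ, ∀ i j, 0 < (A ^ k) i j

/-- The metric `d(ω,ω') = ∑ |ω_n − ω'_n| / 2^n` on the shift space. -/
noncomputable def dshift {N : ℕ} {A : Matrix (Fin N) (Fin N) ℝ} (ω ω' : Shift N A) : ℝ :=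
  ∑' n : ℕ, |((ω.1 n : ℕ) : ℝ) - ((ω'.1 n : ℕ) : ℝ)| / 2 ^ n

/-- `f` is Hölder continuous (w.r.t. the metric `dshift`). -/
def HolderCont {N : ℕ} {A : Matrix (Fin N) (Fin N) ℝ} (f : Shift N A → ℝ) : Prop :=
  ∃ α > (0 : ℝ), ∃ C : ℝ, ∀ ω ω', |f ω - f ω'| ≤ C * dshift ω ω' ^ α

/-- The transfer operator `(L_f φ)(ω) = ∑_{σω' = ω} e^{f ω'} φ ω'`. -/
noncomputable def transferOp {N : ℕ} {A : Matrix (Fin N) (Fin N) ℝ} (f φ : Shift N A → ℝ)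
    (ω : Shift N A) : ℝ :=
  ∑' ω' : {ω' : Shift N A // shiftMap ω' = ω}, Real.exp (f ω'.1) * φ ω'.1

/-- `μ` is shift invariant. -/
def Invariant {N : ℕ} {A : Matrix (Fin N) (Fin N) ℝ} (μ : Measure (Shift N A)) : Prop :=
  ∀ B : Set (Shift N A), MeasurableSet B → μ (shiftMap ⁻¹' B) = μ B

/-- `μ` is a Gibbs measure for `f` with pressure constant `P`:
`C⁻¹ ≤ μ [ω|n] / exp(−nP + S_n f ω) ≤ C` for all `ω`, `n`. -/
def IsGibbs {N : ℕ} {A : Matrix (Fin N) (Fin N) ℝ} (μ : Measure (Shift N A))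
    (f : Shift N A → ℝ) (P : ℝ) : Prop :=
  ∃ C > (0 : ℝ), ∀ (ω : Shift N A) (n : ℕ),
    C⁻¹ * Real.exp (-(n : ℝ) * P + birkhoff f n ω) ≤ (μ (cyl ω n)).toReal ∧
    (μ (cyl ω n)).toReal ≤ C * Real.exp (-(n : ℝ) * P + birkhoff f n ω)

/-- Entropy of the partition of `Σ_A` into cylinders of length `n`. -/
noncomputable def cylEntropy {N : ℕ} {A : Matrix (Fin N) (Fin N) ℝ}
    (μ : Measure (Shift N A)) (n : ℕ) : ℝ :=
  -∑ w : Fin n → Fin N, (μ (cylW w)).toReal * Real.log (μ (cylW w)).toReal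

/-- Kolmogorov–Sinai entropy of an invariant measure on the shift, computed (via the
generating cylinder partition and subadditivity) as `inf_n H_n / n = lim_n H_n / n`. -/
noncomputable def ksEntropy {N : ℕ} {A : Matrix (Fin N) (Fin N) ℝ}
    (μ : Measure (Shift N A)) : ℝ :=
  ⨅ n : ℕ, cylEntropy μ (n + 1) / (n + 1)

/-- Topological pressure `P(σ, f) = sup_μ (h_μ(σ) + ∫ f dμ)` over invariant Borel
probability measures. -/
noncomputable def pressure {N : ℕ} {A : Matrix (Fin N) (Fin N) ℝ} (f : Shift N A → ℝ) : ℝ :=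
  sSup {x : ℝ | ∃ μ : Measure (Shift N A), IsProbabilityMeasure μ ∧ Invariant μ ∧
    x = ksEntropy μ + ∫ ω, f ω ∂μ}

/-- The entropy spectrum `E^{(μ)}(α)`: the topological entropy of the level set
`{ω : lim_n −(1/n) log μ [ω|n] = α}`. -/
noncomputable def entSpec {N : ℕ} {A : Matrix (Fin N) (Fin N) ℝ}
    (μ : Measure (Shift N A)) (α : ℝ) : EReal :=
  Dynamics.coverEntropy shiftMap
    {ω : Shift N A |
      Tendsto (fun n : ℕ => -(n : ℝ)⁻¹ * Real.log (μ (cyl ω n)).toReal) atTop (𝓝 α)}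

/-!
Along `X` we have `f ∘ σ^j = g ∘ σ^j ∘ Φ`, and `f` is separating while `g` is `n`-locally
constant; sliding a window of length `n` through the first `L ≥ n` places shows that `Φ ω|L`
determines `ω|L`. By density of `X` and `Y` and surjectivity of `Φ` this is a well-defined map
from the finite set of admissible `L`-words onto itself, hence a bijection, and its injectivity is
the statement that `ω|L` determines `Φ ω|L`. So `Φ` is uniformly continuous on `X`; it extends
uniquely to the compact space `Σ_A`, and the extension commutes with `σ` by density.
-/

open Set Function

theorem Set.Finite.apply_eq_of_apply_eq_of_image_eq {α β : Type*} {a b : α → β} {s : Set α}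
    (hfin : (a '' s).Finite) (himage : b '' s = a '' s)
    (hab : ∀ x ∈ s, ∀ y ∈ s, a x = a y → b x = b y)
    {x y : α} (hx : x ∈ s) (hy : y ∈ s) (hxy : b x = b y) : a x = a y := by
  have : Nonempty α := ⟨x⟩
  set G := b ∘ invFunOn a s
  have hG : ∀ z ∈ s, G (a z) = b z := fun z hz =>
    hab _ (invFunOn_mem ⟨z, hz, rfl⟩) z hz (invFunOn_eq ⟨z, hz, rfl⟩)
  have hGimage : G '' (a '' s) = a '' s := by
    rw [image_image, image_congr hG, himage]
  have hinj : InjOn G (a '' s) :=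
    ((hfin.surjOn_iff_bijOn_of_mapsTo (mapsTo_iff_image_subset.2 hGimage.subset)).1
      hGimage.symm.subset).injOn
  exact hinj (mem_image_of_mem a hx) (mem_image_of_mem a hy) (by rw [hG x hx, hG y hy, hxy])

theorem Set.MapsTo.iterate_semiconj_on {α β : Type*} {σ : α → α} {τ : β → β} {Φ : α → β}
    {X : Set α} (hσ : MapsTo σ X X) (hΦ : ∀ x ∈ X, Φ (σ x) = τ (Φ x)) (j : ℕ) :
    ∀ x ∈ X, Φ (σ^[j] x) = τ^[j] (Φ x) := by
  induction j with
  | zero => exact fun _ _ => rfl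
  | succ j ih =>
    intro x hx
    rw [iterate_succ_apply', iterate_succ_apply', hΦ _ (hσ.iterate j hx), ih x hx]

theorem Dense.existsUnique_continuous_extension_semiconj {α β : Type*} [UniformSpace α]
    [UniformSpace β] [CompleteSpace β] [T2Space β] {X : Set α} (hX : Dense X)
    {σ : α → α} {τ : β → β} (hσ : Continuous σ) (hτ : Continuous τ) (hσX : MapsTo σ X X)
    {Φ : α → β} (hΦ : UniformContinuousOn Φ X) (hcomm : ∀ x ∈ X, Φ (σ x) = τ (Φ x)) :
    ∃! Ψ : α → β, Continuous Ψ ∧ EqOn Ψ Φ X ∧ Ψ ∘ σ = τ ∘ Ψ := by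
  have h_e : IsUniformInducing (Subtype.val : X → α) :=
    isUniformEmbedding_subtype_val.isUniformInducing
  have h_f : UniformContinuous (X.domRestrict Φ) := uniformContinuousOn_iff_restrict.1 hΦ
  set Ψ := (h_e.isDenseInducing hX.denseRange_val).extend (X.domRestrict Φ)
  have hΨc : Continuous Ψ :=
    (uniformContinuous_uniformly_extend h_e hX.denseRange_val h_f).continuous
  have hΨΦ : EqOn Ψ Φ X := fun x hx => uniformly_extend_of_ind h_e hX.denseRange_val h_f ⟨x, hx⟩
  refine ⟨Ψ, ⟨hΨc, hΨΦ, ?_⟩, fun Ψ' ⟨hΨ'c, hΨ'Φ, _⟩ => ?_⟩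
  · refine Continuous.ext_on hX (hΨc.comp hσ) (hτ.comp hΨc) fun x hx => ?_
    simp only [comp_apply, hΨΦ (hσX hx), hΨΦ hx, hcomm x hx]
  · exact Continuous.ext_on hX hΨ'c hΨc fun x hx => (hΨ'Φ hx).trans (hΨΦ hx).symm

namespace Shift

variable {N : ℕ} {A : Matrix (Fin N) (Fin N) ℝ}

open scoped Uniformity

theorem shiftMap_iterate_apply (ω : Shift N A) (j k : ℕ) :
    (shiftMap^[j] ω).1 k = ω.1 (k + j) := by
  induction j generalizing ω with
  | zero => rfl
  | succ j ih => rw [iterate_succ_apply, ih, ← add_assoc]; rfl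

theorem uniformity_eq_iInf_principal :
    𝓤 (Shift N A) = ⨅ k : ℕ, 𝓟 {p : Shift N A × Shift N A | p.1.1 k = p.2.1 k} := by
  let : UniformSpace (Fin N) := ⊥
  rw [show 𝓤 (Shift N A) = comap (fun p : Shift N A × Shift N A => (p.1.1, p.2.1))
    (𝓤 (ℕ → Fin N)) from uniformity_subtype, Pi.uniformity]
  simp only [bot_uniformity, comap_iInf, comap_principal]
  rfl

theorem uniformity_hasBasis_agree :
    (𝓤 (Shift N A)).HasBasis (fun _ : ℕ => True)
      fun L => {p : Shift N A × Shift N A | ∀ k < L, p.1.1 k = p.2.1 k} := by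
  rw [uniformity_eq_iInf_principal]
  refine (hasBasis_iInf_principal_finite _).to_hasBasis (fun t ht => ?_) fun L _ => ?_
  · obtain ⟨M, hM⟩ := ht.bddAbove
    exact ⟨M + 1, trivial, fun p hp => mem_iInter₂.2 fun k hk => hp k (Nat.lt_succ_of_le (hM hk))⟩
  · exact ⟨Iio L, finite_Iio L, fun p hp k hk => mem_iInter₂.1 hp k hk⟩


def prefixWord (L : ℕ) (ω : Shift N A) : Fin L → Fin N := fun k => ω.1 k

theorem prefixWord_eq_prefixWord_iff {L : ℕ} {ω ω' : Shift N A} :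
    prefixWord L ω = prefixWord L ω' ↔ ∀ k < L, ω.1 k = ω'.1 k := by
  simp only [prefixWord, funext_iff, Fin.forall_iff]

theorem image_prefixWord_of_dense {X : Set (Shift N A)} (hX : Dense X) (L : ℕ) :
    prefixWord L '' X = range (prefixWord (A := A) L) := by
  refine (image_subset_range _ _).antisymm ?_
  rintro _ ⟨ω, rfl⟩
  obtain ⟨x, hxX, hx⟩ := hX.inter_nhds_nonempty
    (UniformSpace.ball_mem_nhds ω (uniformity_hasBasis_agree.mem_of_mem (i := L) trivial))
  exact ⟨x, hxX, (prefixWord_eq_prefixWord_iff.2 fun k hk => (hx k hk).symm)⟩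

theorem continuous_shiftMap : Continuous (shiftMap : Shift N A → Shift N A) := by
  let : UniformSpace (Fin N) := ⊥
  refine Continuous.subtype_mk ?_ _
  exact continuous_pi fun k => (continuous_apply (k + 1)).comp continuous_subtype_val

instance : T2Space (Shift N A) := by
  let : UniformSpace (Fin N) := ⊥
  have : DiscreteTopology (Fin N) := ⟨rfl⟩
  exact inferInstanceAs (T2Space {ω : ℕ → Fin N // ∀ n, A (ω n) (ω (n + 1)) = 1})

instance : CompactSpace (Shift N A) := by
  let : UniformSpace (Fin N) := ⊥
  have : DiscreteTopology (Fin N) := ⟨rfl⟩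
  have hclosed : IsClosed {ω : ℕ → Fin N | ∀ n, A (ω n) (ω (n + 1)) = 1} := by
    simp only [ofPred_forall]
    exact isClosed_iInter fun n => (isClosed_discrete {p : Fin N × Fin N | A p.1 p.2 = 1}).preimage
      (f := fun ω : ℕ → Fin N => (ω n, ω (n + 1)))
      ((continuous_apply n).prodMk (continuous_apply (n + 1)))
  exact isCompact_iff_compactSpace.1 hclosed.isCompact

variable {n L : ℕ} {f g : Shift N A → ℝ}
  {X Y : Set (Shift N A)} {Φ : Shift N A → Shift N A}

theorem agree_of_image_agree (hn : 0 < n)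
    (hgloc : ∀ ω ω' : Shift N A, (∀ k < n, ω.1 k = ω'.1 k) → g ω = g ω')
    (hfsep : ∀ ω ω' : Shift N A, (∃ k < n, ω.1 k ≠ ω'.1 k) → f ω ≠ f ω')
    (hXinv : MapsTo shiftMap X X) (hcomm : ∀ ω ∈ X, Φ (shiftMap ω) = shiftMap (Φ ω))
    (hfg : ∀ ω ∈ X, f ω = g (Φ ω)) (hL : n ≤ L) {ω ω' : Shift N A} (hω : ω ∈ X) (hω' : ω' ∈ X)
    (hΦ : ∀ k < L, (Φ ω).1 k = (Φ ω').1 k) : ∀ k < L, ω.1 k = ω'.1 k := by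
  have hfg_iter : ∀ j, ∀ x ∈ X, f (shiftMap^[j] x) = g (shiftMap^[j] (Φ x)) := fun j x hx => by
    rw [hfg _ (hXinv.iterate j hx), hXinv.iterate_semiconj_on hcomm j x hx]
  intro k hk
  -- The window `[j, j + n)` contains `k` and lies inside `[0, L)`.
  set j := min k (L - n)
  have hf : f (shiftMap^[j] ω) = f (shiftMap^[j] ω') := by
    rw [hfg_iter j ω hω, hfg_iter j ω' hω']
    refine hgloc _ _ fun i hi => ?_
    simp only [shiftMap_iterate_apply]
    exact hΦ _ (by omega)
  have hwindow : ∀ i < n, (shiftMap^[j] ω).1 i = (shiftMap^[j] ω').1 i := by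
    by_contra! hne
    exact hfsep _ _ hne hf
  have hkj : k - j + j = k := by omega
  simpa only [shiftMap_iterate_apply, hkj] using hwindow (k - j) (by omega)

theorem image_agree_of_agree (hX : Dense X) (hY : Dense Y) (hsurj : SurjOn Φ X Y)
    (hback : ∀ ω ∈ X, ∀ ω' ∈ X, (∀ k < L, (Φ ω).1 k = (Φ ω').1 k) → ∀ k < L, ω.1 k = ω'.1 k)
    {ω ω' : Shift N A} (hω : ω ∈ X) (hω' : ω' ∈ X) (h : ∀ k < L, ω.1 k = ω'.1 k) :
    ∀ k < L, (Φ ω).1 k = (Φ ω').1 k := by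
  have himage : prefixWord L '' X = (prefixWord L ∘ Φ) '' X := by
    refine (image_prefixWord_of_dense hX L).trans (Subset.antisymm ?_ ?_)
    · rw [← image_prefixWord_of_dense hY L, image_comp]
      exact image_mono hsurj
    · exact (image_subset_range _ _).trans (range_comp_subset_range _ _)
  refine prefixWord_eq_prefixWord_iff.1 <| (toFinite _).apply_eq_of_apply_eq_of_image_eq himage
    (fun x hx y hy hxy => ?_) hω hω' (prefixWord_eq_prefixWord_iff.2 h)
  exact prefixWord_eq_prefixWord_iff.2 (hback x hx y hy (prefixWord_eq_prefixWord_iff.1 hxy))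

end Shift

theorem extension_of_isomorphism_general
    (N : ℕ) (A : Matrix (Fin N) (Fin N) ℝ)
    (n : ℕ) (hn : 0 < n)
    (f g : Shift N A → ℝ)
    (hgloc : ∀ ω ω' : Shift N A, (∀ k < n, ω.1 k = ω'.1 k) → g ω = g ω')
    (hfsep : ∀ ω ω' : Shift N A, (∃ k < n, ω.1 k ≠ ω'.1 k) → f ω ≠ f ω')
    (X Y : Set (Shift N A)) (hX : Dense X) (hY : Dense Y)
    (hXinv : Set.MapsTo shiftMap X X)
    (Φ : Shift N A → Shift N A)
    (hsurj : Set.SurjOn Φ X Y)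
    (hcomm : ∀ ω ∈ X, Φ (shiftMap ω) = shiftMap (Φ ω))
    (hfg : ∀ ω ∈ X, f ω = g (Φ ω)) :
    (∀ m : ℕ, ∀ ω ∈ X, ∀ ω' ∈ X,
      (∀ k < n * m, ω.1 k = ω'.1 k) → ∀ k < n * m, (Φ ω).1 k = (Φ ω').1 k) ∧
    UniformContinuousOn Φ X ∧
    ∃! Φs : Shift N A → Shift N A,
      Continuous Φs ∧ Set.EqOn Φs Φ X ∧ Φs ∘ shiftMap = shiftMap ∘ Φs := by
  have hforward : ∀ L, n ≤ L → ∀ ω ∈ X, ∀ ω' ∈ X,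
      (∀ k < L, ω.1 k = ω'.1 k) → ∀ k < L, (Φ ω).1 k = (Φ ω').1 k :=
    fun L hL ω hω ω' hω' => Shift.image_agree_of_agree hX hY hsurj
      (fun _ hx _ hy => Shift.agree_of_image_agree hn hgloc hfsep hXinv hcomm hfg hL hx hy) hω hω'
  have hUC : UniformContinuousOn Φ X :=
    (Shift.uniformity_hasBasis_agree.uniformContinuousOn_iff Shift.uniformity_hasBasis_agree).2
      fun L _ => ⟨L + n, trivial, fun x hx y hy hxy k hk =>
        hforward (L + n) (by omega) x hx y hy hxy k (by omega)⟩
  refine ⟨fun m ω hω ω' hω' h => ?_, hUC, hX.existsUnique_continuous_extension_semiconj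
    Shift.continuous_shiftMap Shift.continuous_shiftMap hXinv hUC hcomm⟩
  rcases m.eq_zero_or_pos with rfl | hm
  · simp
  · exact hforward _ (Nat.le_mul_of_pos_right n hm) ω hω ω' hω' h

/-- Extension lemma.  Let `f` be `n`-locally constant and separating, `X, Y` dense
shift-forward-invariant subsets, `g` `n`-locally constant, and `Φ` a map with `Φ(X) = Y`,
commuting with the shift on `X` and satisfying `f = g ∘ Φ` on `X`.  Then whenever
`ω, ω' ∈ X` agree in their first `n·m` coordinates, so do `Φ ω` and `Φ ω'`; consequently `Φ`
is uniformly continuous on `X` and extends uniquely to a continuous `Φ* : Σ_A → Σ_A`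
commuting with the shift. -/
theorem extension_of_isomorphism
    (N : ℕ) (hN : 2 ≤ N) (A : Matrix (Fin N) (Fin N) ℝ)
    (h01 : ZeroOne A) (hap : Aperiodic A)
    (n : ℕ) (hn : 0 < n)
    (f g : Shift N A → ℝ)
    (hfloc : ∀ ω ω' : Shift N A, (∀ k < n, ω.1 k = ω'.1 k) → f ω = f ω')
    (hgloc : ∀ ω ω' : Shift N A, (∀ k < n, ω.1 k = ω'.1 k) → g ω = g ω')
    (hfsep : ∀ ω ω' : Shift N A, (∃ k < n, ω.1 k ≠ ω'.1 k) → f ω ≠ f ω')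
    (X Y : Set (Shift N A)) (hX : Dense X) (hY : Dense Y)
    (hXinv : Set.MapsTo shiftMap X X) (hYinv : Set.MapsTo shiftMap Y Y)
    (Φ : Shift N A → Shift N A)
    (hmap : Set.MapsTo Φ X Y) (hsurj : Set.SurjOn Φ X Y)
    (hcomm : ∀ ω ∈ X, Φ (shiftMap ω) = shiftMap (Φ ω))
    (hfg : ∀ ω ∈ X, f ω = g (Φ ω)) :
    (∀ m : ℕ, ∀ ω ∈ X, ∀ ω' ∈ X,
      (∀ k < n * m, ω.1 k = ω'.1 k) → ∀ k < n * m, (Φ ω).1 k = (Φ ω').1 k) ∧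
    UniformContinuousOn Φ X ∧
    ∃! Φs : Shift N A → Shift N A,
      Continuous Φs ∧ Set.EqOn Φs Φ X ∧ Φs ∘ shiftMap = shiftMap ∘ Φs :=
  extension_of_isomorphism_general N A n hn f g hgloc hfsep X Y hX hY hXinv Φ hsurj hcomm hfg
end
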